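/- Let ζ = [[0,1],[−1,1]] ∈ PSL₂(ℝ), D the diagonal subgroup modulo ±I, and T the upper-triangular subgroup modulo ±I. If g ∈ D ∪ Dξ (ξ = [[0,1],[−1,0]]) and ζ g ζ⁻¹ ∈ T, then g = id. -/

import Mathlib

/-- `SL(2,ℝ)`. -/
abbrev SL2R := Matrix.SpecialLinearGroup (Fin 2) ℝ

/-- `PSL(2,ℝ) = SL(2,ℝ)/{±I}`. -/
abbrev PSL2R := SL2R ⧸ Subgroup.center SL2R

/-- The projection `SL(2,ℝ) → PSL(2,ℝ)`. -/
def projPSL : SL2R →* PSL2R := QuotientGroup.mk' (Subgroup.center SL2R)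

/-- The image `D` of the diagonal subgroup in `PSL(2,ℝ)`. -/
def Dset : Set PSL2R :=
  {g | ∃ (α : ℝ) (hα : α ≠ 0),
    g = projPSL ⟨!![α, 0; 0, α⁻¹], by rw [Matrix.det_fin_two_of]; field_simp <;> simp⟩}

/-- The image `T` of the upper-triangular subgroup in `PSL(2,ℝ)`. -/
def Tset : Set PSL2R :=
  {g | ∃ (α β : ℝ) (hα : α ≠ 0),
    g = projPSL ⟨!![α, β; 0, α⁻¹], by rw [Matrix.det_fin_two_of]; field_simp <;> simp⟩}

/-- The class `ξ` of `[[0,1],[-1,0]]` in `PSL(2,ℝ)`. -/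
def xiP : PSL2R := projPSL ⟨!![0, 1; -1, 0], by rw [Matrix.det_fin_two_of]; norm_num⟩

/-- The class `ζ` of `[[0,1],[-1,1]]` in `PSL(2,ℝ)`. -/
def zetaP : PSL2R := projPSL ⟨!![0, 1; -1, 1], by rw [Matrix.det_fin_two_of]; norm_num⟩

/-!
`T` is the image of the upper-triangular matrices, and multiplying by `±I` does not change whether
the `(1,0)` entry vanishes, so `ζ g ζ⁻¹ ∈ T` says exactly that for a representative `M` of `g` the
`(1,0)` entry of `ζ M ζ⁻¹`, namely `M₁₀ + M₁₁ - M₀₀ - M₀₁`, vanishes. For `M = diag(α, α⁻¹)` this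
forces `α² = 1`, i.e. `M = ±I`; for `M = diag(α, α⁻¹) ξ` it forces `α² = -1`, which is impossible.
-/

open Matrix Matrix.SpecialLinearGroup

lemma Matrix.SpecialLinearGroup.mul_center_apply_eq_zero {n R : Type*} [Fintype n] [DecidableEq n]
    [CommRing R] {M z : SpecialLinearGroup n R} (hz : z ∈ Subgroup.center (SpecialLinearGroup n R))
    {i j : n} (h : M i j = 0) : (M * z) i j = 0 := by
  obtain ⟨r, -, hr⟩ := mem_center_iff.mp hz
  simp [coe_mul, ← hr, h]

lemma apply_one_zero_eq_zero_of_projPSL_mem_Tset {M : SL2R} (h : projPSL M ∈ Tset) :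
    M 1 0 = 0 := by
  obtain ⟨_, _, _, hM⟩ := h
  obtain ⟨z, hz, hMz⟩ := (QuotientGroup.mk'_eq_mk' _).mp hM.symm
  rw [← hMz]
  exact mul_center_apply_eq_zero hz (by simp)

noncomputable def diagSL (α : ℝ) (hα : α ≠ 0) : SL2R :=
  ⟨!![α, 0; 0, α⁻¹], by simp [det_fin_two_of, hα]⟩

def xiSL : SL2R := ⟨!![0, 1; -1, 0], by simp [det_fin_two_of]⟩

def zetaSL : SL2R := ⟨!![0, 1; -1, 1], by simp [det_fin_two_of]⟩

lemma coe_diagSL (α : ℝ) (hα : α ≠ 0) :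
    (diagSL α hα : Matrix (Fin 2) (Fin 2) ℝ) = !![α, 0; 0, α⁻¹] :=
  rfl

lemma coe_xiSL : (xiSL : Matrix (Fin 2) (Fin 2) ℝ) = !![0, 1; -1, 0] :=
  rfl

lemma coe_zetaSL : (zetaSL : Matrix (Fin 2) (Fin 2) ℝ) = !![0, 1; -1, 1] :=
  rfl

lemma mem_Dset_iff {g : PSL2R} : g ∈ Dset ↔ ∃ (α : ℝ) (hα : α ≠ 0), g = projPSL (diagSL α hα) :=
  Iff.rfl

lemma projPSL_diagSL_eq_one {α : ℝ} (hα : α ≠ 0) (h : α * α = 1) :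
    projPSL (diagSL α hα) = 1 := by
  have hinv : α⁻¹ = α := by field_simp; linarith
  refine (QuotientGroup.eq_one_iff _).mpr (mem_center_iff.mpr ⟨α, by simpa [sq] using h, ?_⟩)
  ext i j
  fin_cases i <;> fin_cases j <;> simp [coe_diagSL, hinv]

lemma zetaSL_conj_apply_one_zero {M : SL2R} {a b c d : ℝ}
    (hM : (M : Matrix (Fin 2) (Fin 2) ℝ) = !![a, b; c, d]) :
    (zetaSL * M * zetaSL⁻¹) 1 0 = c + d - a - b := by
  have hζinv : ((zetaSL⁻¹ : SL2R) : Matrix (Fin 2) (Fin 2) ℝ) = !![1, -1; 1, 0] := by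
    rw [coe_inv, coe_zetaSL, adjugate_fin_two_of]
    simp
  rw [coe_mul, coe_mul, coe_zetaSL, hM, hζinv, mul_fin_two, mul_fin_two]
  simp only [of_apply, cons_val', cons_val_zero, cons_val_one, cons_val_fin_one]
  ring

lemma add_eq_add_of_zetaP_conj_mem_Tset {M : SL2R} {a b c d : ℝ}
    (hM : (M : Matrix (Fin 2) (Fin 2) ℝ) = !![a, b; c, d])
    (h : zetaP * projPSL M * zetaP⁻¹ ∈ Tset) : c + d = a + b := by
  rw [show zetaP = projPSL zetaSL from rfl, ← map_inv, ← map_mul, ← map_mul] at h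
  have := apply_one_zero_eq_zero_of_projPSL_mem_Tset h
  rw [zetaSL_conj_apply_one_zero hM] at this
  linarith

theorem stmt16 (g : PSL2R) (hg : g ∈ Dset ∪ (fun x => x * xiP) '' Dset)
    (hconj : zetaP * g * zetaP⁻¹ ∈ Tset) : g = 1 := by
  simp only [Set.mem_union, Set.mem_image, mem_Dset_iff] at hg
  rcases hg with ⟨α, hα, rfl⟩ | ⟨_, ⟨α, hα, rfl⟩, rfl⟩
  · have h : 0 + α⁻¹ = α + 0 := add_eq_add_of_zetaP_conj_mem_Tset (coe_diagSL α hα) hconj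
    exact projPSL_diagSL_eq_one hα (by field_simp at h; linarith)
  · have hM : ((diagSL α hα * xiSL : SL2R) : Matrix (Fin 2) (Fin 2) ℝ) = !![0, α; -α⁻¹, 0] := by
      rw [coe_mul, coe_diagSL, coe_xiSL, mul_fin_two]
      simp
    have h : -α⁻¹ + 0 = 0 + α := add_eq_add_of_zetaP_conj_mem_Tset hM (by rwa [map_mul])
    have hsq : α * α = -1 := by field_simp at h; linarith
    nlinarith [mul_self_nonneg α]
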